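/- arXiv:math/0510465 — 5 statements merged into one kernel-verified Lean document; each statement's English description precedes it below -/
import Mathlib

section
/- Let A and B be finitely generated nilpotent groups, C_A a proper subgroup of A and C_B a proper subgroup of B, and let G = {A * B; C_A = C_B} be their amalgamated free product identifying C_A with C_B via an isomorphism. Then G is not perfect, i.e. [G,G] ≠ G. -/
open Monoid Function

universe u

/-- The family of two groups indexed by `Bool`, used to form the amalgamated
free product `A *_C B` as a `Monoid.PushoutI`. -/
def twoFam (A B : Type u) : Bool → Type u := fun b => bif b then A else B

instance twoFamGroup {A B : Type u} [Group A] [Group B] : ∀ b, Group (twoFam A B b)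
  | true => ‹Group A›
  | false => ‹Group B›

/-- The pair of monomorphisms `α : C →* A`, `β : C →* B` as a family over `Bool`. -/
def twoPhi {A B : Type u} {C : Type*} [Group A] [Group B] [Group C]
    (α : C →* A) (β : C →* B) : ∀ b, C →* twoFam A B b
  | true => α
  | false => β

/-!
If the amalgam `G` were perfect, then so would be every quotient of it. Mapping the factor `A` to
`Aᵃᵇ / image(C_A)` and `B` trivially is compatible on the amalgamated subgroup, so it defines a
homomorphism from `G` to an abelian group, which must then be trivial: `C_A [A, A] = A`. In a
nilpotent group the commutator subgroup consists of non-generators (induct on the class: modulo the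
centre `Z` one gets `C_A Z = A`, which makes `C_A` normal with abelian quotient), so `C_A = A`.
-/

theorem commutator_le_of_sup_center_eq_top {G : Type*} [Group G] {H : Subgroup G}
    (h : H ⊔ Subgroup.center G = ⊤) : commutator G ≤ H := by
  have : H.Normal := Subgroup.normalizer_eq_top_iff.mp <| top_le_iff.mp <|
    h ▸ sup_le Subgroup.le_normalizer (Subgroup.center_le_normalizer _)
  exact Subgroup.Normal.commutator_le_of_self_sup_commutative_eq_top h inferInstance

theorem eq_top_of_sup_commutator_eq_top_of_isNilpotent {G : Type*} [Group G]
    [Group.IsNilpotent G] {H : Subgroup G} (h : H ⊔ commutator G = ⊤) : H = ⊤ := by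
  refine Group.nilpotent_center_quotient_ind
    (P := fun G _ _ => ∀ H : Subgroup G, H ⊔ commutator G = ⊤ → H = ⊤) G
    (fun G _ _ H _ => Subsingleton.elim H ⊤) (fun G _ _ ih H h => ?_) H h
  let q := QuotientGroup.mk' (Subgroup.center G)
  have hq : Function.Surjective q := QuotientGroup.mk'_surjective _
  have hmap : H.map q ⊔ commutator (G ⧸ Subgroup.center G) = ⊤ := by
    rw [← Subgroup.map_top_of_surjective q hq, ← h, Subgroup.map_sup, commutator_def,
      commutator_def, Subgroup.map_commutator, Subgroup.map_top_of_surjective q hq]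
  have hcenter : H ⊔ Subgroup.center G = ⊤ := by
    simpa [q, Subgroup.comap_map_eq] using congrArg (Subgroup.comap q) (ih _ hmap)
  rw [← h, sup_eq_left.mpr (commutator_le_of_sup_center_eq_top hcenter)]

theorem Monoid.PushoutI.range_sup_commutator_eq_top_of_commutator_eq_top {ι H : Type*}
    [DecidableEq ι] {G : ι → Type*} [∀ i, Group (G i)] [Group H] {φ : ∀ i, H →* G i}
    (h : commutator (PushoutI φ) = ⊤) (i : ι) : (φ i).range ⊔ commutator (G i) = ⊤ := by
  let N := (φ i).range.map (Abelianization.of (G := G i))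
  let q : G i →* Abelianization (G i) ⧸ N := (QuotientGroup.mk' N).comp Abelianization.of
  have hker : q.ker = (φ i).range ⊔ commutator (G i) := by
    rw [← MonoidHom.comap_ker, QuotientGroup.ker_mk', Subgroup.comap_map_eq,
      Abelianization.ker_of]
  let f := Function.update (fun j => (1 : G j →* Abelianization (G i) ⧸ N)) i q
  have hf : ∀ j, (f j).comp (φ j) = 1 := by
    intro j
    rcases eq_or_ne j i with rfl | hj
    · ext x
      simp only [f, Function.update_self]
      exact (QuotientGroup.eq_one_iff _).mpr ⟨φ j x, ⟨x, rfl⟩, rfl⟩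
    · simp only [f, Function.update_of_ne hj, MonoidHom.one_comp]
  have hlift : ∀ x, PushoutI.lift f 1 hf x = 1 := fun x =>
    Abelianization.commutator_subset_ker _ (h ▸ Subgroup.mem_top x)
  rw [← hker, eq_top_iff]
  intro g _
  simpa [f] using hlift (PushoutI.of i g)

theorem amalgamated_product_of_fg_nilpotent_not_perfect_general
    {A B : Type} [Group A] [Group B]
    [Group.IsNilpotent A]
    (CA : Subgroup A) (CB : Subgroup B) (hCA : CA ≠ ⊤)
    (φ : CA ≃* CB) :
    commutator (PushoutI (twoPhi CA.subtype (CB.subtype.comp φ.toMonoidHom))) ≠ ⊤ := by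
  intro h
  have hA : CA.subtype.range ⊔ commutator A = ⊤ :=
    PushoutI.range_sup_commutator_eq_top_of_commutator_eq_top h true
  rw [Subgroup.range_subtype] at hA
  exact hCA (eq_top_of_sup_commutator_eq_top_of_isNilpotent hA)

/-- Let `A`, `B` be finitely generated nilpotent groups, `C_A < A` and
`C_B < B` proper subgroups identified via an isomorphism `φ`, and let
`G = {A * B; C_A = C_B}` be the amalgamated free product. Then `G` is not perfect. -/
theorem amalgamated_product_of_fg_nilpotent_not_perfect
    {A B : Type} [Group A] [Group B] [Group.FG A] [Group.FG B]
    [Group.IsNilpotent A] [Group.IsNilpotent B]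
    (CA : Subgroup A) (CB : Subgroup B) (hCA : CA ≠ ⊤) (hCB : CB ≠ ⊤)
    (φ : CA ≃* CB) :
    commutator (PushoutI (twoPhi CA.subtype (CB.subtype.comp φ.toMonoidHom))) ≠ ⊤ :=
  amalgamated_product_of_fg_nilpotent_not_perfect_general CA CB hCA φ
end

section
/- If A is a finitely generated nilpotent group and C is a proper subgroup of A, then the quotient of the abelianization A_ab by the image of C is a nontrivial group. -/
/-!
In a nilpotent group a subgroup `H` with `H ⊔ [G, G] = G` is all of `G`: if `H ⊔ γₙ = G` then,
modulo `γₙ₊₁`, the image of `γₙ` is central, so `[G, G] ≤ H ⊔ γₙ₊₁` and hence `H ⊔ γₙ₊₁ = G`;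
the lower central series reaches `⊥`. A proper subgroup `C` therefore has
`C ⊔ [A, A] ≠ A`, which is the preimage of its image in the abelianization.
-/

namespace Subgroup

variable {G : Type*} [Group G]

open scoped commutatorElement Pointwise

theorem commutatorElement_mul_mul_of_mem_center {h₁ h₂ z₁ z₂ : G} (hz₁ : z₁ ∈ center G)
    (hz₂ : z₂ ∈ center G) : ⁅h₁ * z₁, h₂ * z₂⁆ = ⁅h₁, h₂⁆ := by
  rw [mem_center_iff] at hz₁ hz₂
  calc ⁅h₁ * z₁, h₂ * z₂⁆ = h₁ * (z₁ * h₂) * (z₂ * (z₁⁻¹ * h₁⁻¹)) * z₂⁻¹ * h₂⁻¹ := by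
        rw [commutatorElement_def]; group
    _ = h₁ * (h₂ * z₁) * (z₁⁻¹ * h₁⁻¹ * z₂) * z₂⁻¹ * h₂⁻¹ := by rw [hz₁ h₂, hz₂]
    _ = ⁅h₁, h₂⁆ := by rw [commutatorElement_def]; group

theorem commutator_le_of_sup_center_eq_top {H : Subgroup G} (h : H ⊔ center G = ⊤) :
    _root_.commutator G ≤ H := by
  rw [_root_.commutator_def, commutator_le]
  intro g₁ _ g₂ _
  have hg₁ : g₁ ∈ (H : Set G) * (center G : Set G) := by rw [← mul_normal, h]; trivial
  have hg₂ : g₂ ∈ (H : Set G) * (center G : Set G) := by rw [← mul_normal, h]; trivial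
  obtain ⟨h₁, hh₁, z₁, hz₁, rfl⟩ := hg₁
  obtain ⟨h₂, hh₂, z₂, hz₂, rfl⟩ := hg₂
  rw [commutatorElement_mul_mul_of_mem_center hz₁ hz₂]
  exact H.commutator_le_self (commutator_mem_commutator hh₁ hh₂)

theorem commutator_le_sup_of_sup_eq_top {H N M : Subgroup G} [M.Normal] (hNM : ⁅N, ⊤⁆ ≤ M)
    (h : H ⊔ N = ⊤) : _root_.commutator G ≤ H ⊔ M := by
  set f := QuotientGroup.mk' M
  have hsurj : Function.Surjective f := QuotientGroup.mk'_surjective M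
  have hN_central : N.map f ≤ center (G ⧸ M) := by
    rw [← commutator_top_right_eq_bot_iff_le_center, eq_bot_iff, ← map_top_of_surjective f hsurj,
      ← map_commutator, map_le_iff_le_comap, MonoidHom.comap_bot, QuotientGroup.ker_mk']
    exact hNM
  have hH_sup : H.map f ⊔ center (G ⧸ M) = ⊤ := by
    rw [eq_top_iff, ← map_top_of_surjective f hsurj, ← h, map_sup]
    exact sup_le_sup_left hN_central _
  rw [← QuotientGroup.ker_mk' M, ← comap_map_eq, ← map_le_iff_le_comap, _root_.commutator_def,
    map_commutator, map_top_of_surjective f hsurj]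
  exact commutator_le_of_sup_center_eq_top hH_sup

theorem eq_top_of_sup_commutator_eq_top [Group.IsNilpotent G] {H : Subgroup G}
    (h : H ⊔ _root_.commutator G = ⊤) : H = ⊤ := by
  have hsup : ∀ n, H ⊔ (⊤ : Subgroup G).lowerCentralSeries n = ⊤ := by
    intro n
    induction n with
    | zero => exact sup_top_eq H
    | succ n ih =>
      exact top_le_iff.mp <| h.symm.trans_le <| sup_le le_sup_left <|
        commutator_le_sup_of_sup_eq_top (lowerCentralSeries_succ ⊤ n).ge ih
  obtain ⟨n, hn⟩ := nilpotent_iff_lowerCentralSeries.mp ‹Group.IsNilpotent G›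
  rw [← sup_bot_eq H, ← hn]
  exact hsup n

end Subgroup

theorem abelianization_quotient_image_nontrivial_general {A : Type*} [Group A]
    [Group.IsNilpotent A] (C : Subgroup A) (hC : C ≠ ⊤) :
    Nontrivial (Abelianization A ⧸ C.map Abelianization.of) := by
  rw [QuotientGroup.nontrivial_iff]
  intro hmap
  apply hC
  apply Subgroup.eq_top_of_sup_commutator_eq_top
  rw [← Abelianization.ker_of, ← Subgroup.comap_map_eq, hmap, Subgroup.comap_top]

/-- If `A` is a finitely generated nilpotent group and `C` a proper
subgroup, then the quotient of the abelianization of `A` by the image of `C` is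
nontrivial. -/
theorem abelianization_quotient_image_nontrivial {A : Type*} [Group A] [Group.FG A]
    [Group.IsNilpotent A] (C : Subgroup A) (hC : C ≠ ⊤) :
    Nontrivial (Abelianization A ⧸ C.map Abelianization.of) :=
  abelianization_quotient_image_nontrivial_general C hC
end

section
/- Every nontrivial finitely generated torsion-free nilpotent group admits a surjective homomorphism onto the integers (i.e. is indicable). -/
/-- Old Mathlib definition (removed since): a monoid is torsion-free if no element other
than `1` has finite order. -/
def Monoid.IsTorsionFree (G : Type*) [Monoid G] : Prop :=
  ∀ g : G, g ≠ 1 → ¬IsOfFinOrder g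

/-!
If the abelianization of a nilpotent group `G` is torsion, then so is `G`. Induct on the length of
the lower central series: its last nontrivial term `N = ⁅γ, G⁆` is central and `G ⧸ N` is torsion,
so every `x ∈ γ` has a central power `x ^ k`, whence `⁅x, y⁆ ^ k = ⁅x ^ k, y⁆ = 1`; thus `N` is
generated by commuting torsion elements and is torsion.

Hence a nontrivial torsion-free nilpotent group has a non-torsion abelianization. When the group is
finitely generated, the abelianization modulo torsion is a nonzero free `ℤ`-module, and a
coordinate function of a basis maps it onto `ℤ`.
-/

open scoped commutatorElement

open Subgroup

namespace Abelianization

variable {G H : Type*} [Group G] [Group H]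

theorem of_surjective : Function.Surjective (of : G →* Abelianization G) :=
  QuotientGroup.mk_surjective

theorem map_surjective {f : G →* H} (hf : Function.Surjective f) :
    Function.Surjective (map f) := by
  intro y
  obtain ⟨h, rfl⟩ := of_surjective y
  obtain ⟨g, rfl⟩ := hf h
  exact ⟨of g, map_of f g⟩

instance [Group.FG G] : Group.FG (Abelianization G) :=
  Group.fg_of_surjective of_surjective

end Abelianization

section Nilpotent

variable {G : Type*} [Group G]

theorem commutatorElement_pow_left_of_mem_center {x y : G} (h : ⁅x, y⁆ ∈ center G) (k : ℕ) :
    ⁅x ^ k, y⁆ = ⁅x, y⁆ ^ k := by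
  induction k with
  | zero => simp
  | succ k ih =>
    calc ⁅x ^ (k + 1), y⁆ = x ^ k * ⁅x, y⁆ * (x ^ k)⁻¹ * ⁅x ^ k, y⁆ := by
          simp only [commutatorElement_def]; group
      _ = ⁅x, y⁆ ^ (k + 1) := by rw [mem_center_iff.mp h (x ^ k), ih]; group

theorem isOfFinOrder_of_mem_commutator_top {H : Subgroup G}
    (hcen : ⁅H, (⊤ : Subgroup G)⁆ ≤ center G) (hpow : ∀ x ∈ H, ∃ k, 0 < k ∧ x ^ k ∈ center G)
    {z : G} (hz : z ∈ ⁅H, (⊤ : Subgroup G)⁆) : IsOfFinOrder z := by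
  rw [Subgroup.commutator_def] at hz
  induction hz using closure_induction with
  | mem z hz =>
    obtain ⟨x, hx, y, -, rfl⟩ := hz
    obtain ⟨k, hk, hxk⟩ := hpow x hx
    have hxy := hcen (commutator_mem_commutator hx (mem_top y))
    refine isOfFinOrder_iff_pow_eq_one.mpr ⟨k, hk, ?_⟩
    rw [← commutatorElement_pow_left_of_mem_center hxy, commutatorElement_eq_one_iff_commute]
    exact (mem_center_iff.mp hxk y).symm
  | one => exact IsOfFinOrder.one
  | mul a b _ hb ha_fin hb_fin =>
    exact Commute.isOfFinOrder_mul (mem_center_iff.mp (hcen hb) a) ha_fin hb_fin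
  | inv a _ ha_fin => exact ha_fin.inv

theorem isMulTorsion_of_lowerCentralSeries_succ_eq_bot (n : ℕ)
    (hG : (⊤ : Subgroup G).lowerCentralSeries (n + 1) = ⊥)
    (hab : IsMulTorsion (Abelianization G)) : IsMulTorsion G := by
  induction n generalizing G with
  | zero =>
    intro g
    obtain ⟨k, hk, hgk⟩ := (hab (Abelianization.of g)).exists_pow_eq_one
    have hgk : g ^ k ∈ commutator G := by
      rw [← map_pow] at hgk
      exact (QuotientGroup.eq_one_iff _).mp hgk
    rw [← top_lowerCentralSeries_one, hG, mem_bot] at hgk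
    exact isOfFinOrder_iff_pow_eq_one.mpr ⟨k, hk, hgk⟩
  | succ n ih =>
    set N := (⊤ : Subgroup G).lowerCentralSeries (n + 1)
    have hN_center : N ≤ center G := by
      rw [← centralizer_univ, ← coe_top]
      exact commutator_eq_bot_iff_le_centralizer.mp hG
    have hQ : IsMulTorsion (G ⧸ N) := by
      refine ih ?_ (hab.of_surjective (Abelianization.map_surjective
        (QuotientGroup.mk'_surjective N)))
      rw [← map_top_of_surjective _ (QuotientGroup.mk'_surjective N), ← map_lowerCentralSeries,
        Subgroup.map_eq_bot_iff, QuotientGroup.ker_mk']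
    have hN : IsMulTorsion N := by
      rintro ⟨x, hx⟩
      refine (Submonoid.isOfFinOrder_coe (H := N.toSubmonoid)).mp
        (isOfFinOrder_of_mem_commutator_top hN_center (fun y _ => ?_) hx)
      obtain ⟨k, hk, hyk⟩ := (hQ y).exists_pow_eq_one
      exact ⟨k, hk, hN_center ((QuotientGroup.eq_one_iff _).mp hyk)⟩
    exact hQ.extension_closed (QuotientGroup.ker_mk' N).symm hN

theorem Group.IsNilpotent.isMulTorsion_of_isMulTorsion_abelianization [Group.IsNilpotent G]
    (h : IsMulTorsion (Abelianization G)) : IsMulTorsion G := by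
  obtain ⟨n, hn⟩ := Subgroup.nilpotent_iff_lowerCentralSeries.mp ‹Group.IsNilpotent G›
  exact isMulTorsion_of_lowerCentralSeries_succ_eq_bot n
    (Subgroup.lowerCentralSeries_succ_eq_bot _ (hn ▸ bot_le)) h

end Nilpotent

theorem CommGroup.exists_surjective_multiplicative_int_of_not_isMulTorsion {A : Type*}
    [CommGroup A] [Group.FG A] (hA : ¬IsMulTorsion A) :
    ∃ f : A →* Multiplicative ℤ, Function.Surjective f := by
  have : Nontrivial (A ⧸ torsion A) := by
    rwa [← not_subsingleton_iff_nontrivial, QuotientGroup.subsingleton_iff, torsion_eq_top_iff]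
  have : Module.Finite ℤ (Additive (A ⧸ torsion A)) :=
    Module.Finite.iff_addGroup_fg.mpr inferInstance
  have : Module.Free ℤ (Additive (A ⧸ torsion A)) := Module.free_of_finite_type_torsion_free'
  let b := Module.Free.chooseBasis ℤ (Additive (A ⧸ torsion A))
  obtain ⟨i⟩ := b.index_nonempty
  let F := AddMonoidHom.toMultiplicativeRight (b.coord i).toAddMonoidHom
  have hF : Function.Surjective F := fun n => ⟨Additive.toMul (n.toAdd • b i), by simp [F]⟩
  exact ⟨F.comp (QuotientGroup.mk' _), hF.comp (QuotientGroup.mk'_surjective _)⟩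

/-- Every nontrivial finitely generated torsion-free nilpotent group is
indicable, i.e. admits a surjective homomorphism onto the integers. -/
theorem fg_torsionFree_nilpotent_indicable {G : Type*} [Group G] [Group.FG G]
    [Group.IsNilpotent G] (htf : Monoid.IsTorsionFree G) (hG : Nontrivial G) :
    ∃ f : G →* Multiplicative ℤ, Function.Surjective f := by
  have hab : ¬IsMulTorsion (Abelianization G) := fun h => by
    obtain ⟨g, hg⟩ := exists_ne (1 : G)
    exact htf g hg (Group.IsNilpotent.isMulTorsion_of_isMulTorsion_abelianization h g)
  obtain ⟨f, hf⟩ := CommGroup.exists_surjective_multiplicative_int_of_not_isMulTorsion hab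
  exact ⟨f.comp Abelianization.of, hf.comp Abelianization.of_surjective⟩
end

section
/- Let {A_i}_{i∈I} be an indexed family of groups, C a group with monomorphisms φ_i : C → A_i whose images are central in A_i, and let A be the generalized central product: the quotient of the (restricted) direct product ∏ A_i by the normal subgroup generated by the elements φ_i(c)·φ_j(c)⁻¹ for c ∈ C and i, j ∈ I. Then for each i the canonical homomorphism μ_i : A_i → A is injective. -/
/-- The restricted direct product of a family of groups: the subgroup of the direct
product consisting of families with finitely many nontrivial entries. -/
def restrictedProd {ι : Type*} (A : ι → Type*) [∀ i, Group (A i)] : Subgroup (∀ i, A i) where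
  carrier := {f | {i | f i ≠ 1}.Finite}
  one_mem' := by
    show {i | (1 : ∀ i, A i) i ≠ 1}.Finite
    simp
  mul_mem' := by
    intro f g hf hg
    show {i | (f * g) i ≠ 1}.Finite
    refine (Set.Finite.union hf hg).subset ?_
    intro x hx
    simp only [Set.mem_union, Set.mem_setOf_eq] at *
    by_contra h
    push_neg at h
    exact hx (by simp [Pi.mul_apply, h.1, h.2])
  inv_mem' := by
    intro f hf
    show {i | f⁻¹ i ≠ 1}.Finite
    simpa using hf

lemma mulSingle_mem_restrictedProd {ι : Type*} [DecidableEq ι] {A : ι → Type*}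
    [∀ i, Group (A i)] (i : ι) (a : A i) : Pi.mulSingle i a ∈ restrictedProd A := by
  show {x | Pi.mulSingle i a x ≠ 1}.Finite
  refine (Set.finite_singleton i).subset ?_
  intro x hx
  simp only [Set.mem_setOf_eq] at hx
  simp only [Set.mem_singleton_iff]
  by_contra h
  exact hx (Pi.mulSingle_eq_of_ne h a)

/-- The canonical inclusion of a factor into the restricted direct product. -/
def inclRestricted {ι : Type*} [DecidableEq ι] (A : ι → Type*) [∀ i, Group (A i)]
    (i : ι) : A i →* restrictedProd A :=
  (MonoidHom.mulSingle A i).codRestrict _ (fun a => mulSingle_mem_restrictedProd i a)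

/-! The defining relations of the central product all lie in the subgroup `K` of families
`(φ j (c j))_j` with `∏ᶠ j, φ i (c j) = 1`, the product taken in the abelian group `Z(A i)`.
Since `K` consists of central elements it is normal, so it contains the whole normal closure.
If the image of `a : A i` lies in `K`, injectivity of the `φ j` forces the family `c` to be
supported at `i`, so the product condition reads `φ i (c i) = 1`, i.e. `a = 1`. -/

open Subgroup
open scoped IsMulCommutative

lemma Subgroup.normal_of_le_center {G : Type*} [Group G] {H : Subgroup G} (h : H ≤ center G) :
    H.Normal :=
  ⟨fun n hn g => by rwa [mem_center_iff.1 (h hn) g, mul_inv_cancel_right]⟩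

section
variable {ι : Type*} {A B : ι → Type*} [∀ i, Group (A i)] [∀ i, Group (B i)]

def restrictedProdMap (φ : ∀ i, B i →* A i) : restrictedProd B →* restrictedProd A where
  toFun f := ⟨fun i => φ i (f.1 i), f.2.subset fun i hi h => hi (by simp [h])⟩
  map_one' := by ext; simp
  map_mul' _ _ := by ext; simp

@[simp]
lemma restrictedProdMap_apply (φ : ∀ i, B i →* A i) (f : restrictedProd B) (i : ι) :
    (restrictedProdMap φ f : ∀ i, A i) i = φ i (f.1 i) :=
  rfl

lemma restrictedProdMap_injective {φ : ∀ i, B i →* A i} (hφ : ∀ i, Function.Injective (φ i)) :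
    Function.Injective (restrictedProdMap φ) :=
  fun _ _ h => Subtype.ext <| funext fun i => hφ i (congrFun (congrArg Subtype.val h) i)

@[simp]
lemma coe_inclRestricted [DecidableEq ι] (i : ι) (a : A i) :
    (inclRestricted A i a : ∀ j, A j) = Pi.mulSingle i a :=
  rfl

lemma restrictedProdMap_inclRestricted [DecidableEq ι] (φ : ∀ i, B i →* A i) (i : ι) (b : B i) :
    restrictedProdMap φ (inclRestricted B i b) = inclRestricted A i (φ i b) :=
  Subtype.ext <| funext <| Pi.apply_mulSingle (fun j => φ j) (fun _ => map_one _) i b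

lemma range_restrictedProdMap_le_center {φ : ∀ i, B i →* A i}
    (hφ : ∀ i b, φ i b ∈ center (A i)) : (restrictedProdMap φ).range ≤ center (restrictedProd A) := by
  rintro _ ⟨f, rfl⟩
  refine mem_center_iff.2 fun g => Subtype.ext <| funext fun i => ?_
  exact mem_center_iff.1 (hφ i (f.1 i)) (g.1 i)

end

noncomputable def restrictedProdFinprod (ι M : Type*) [CommGroup M] :
    restrictedProd (fun _ : ι => M) →* M where
  toFun f := ∏ᶠ i, f.1 i
  map_one' := finprod_one
  map_mul' f g := finprod_mul_distrib f.2 g.2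

lemma restrictedProdFinprod_inclRestricted {ι M : Type*} [DecidableEq ι] [CommGroup M] (i : ι)
    (m : M) : restrictedProdFinprod ι M (inclRestricted _ i m) = m :=
  (finprod_eq_single _ i fun _ => Pi.mulSingle_eq_of_ne (M := fun _ => M) (x := m)).trans
    (Pi.mulSingle_eq_same (M := fun _ => M) i m)

section
variable {ι : Type*} {A : ι → Type*} [∀ i, Group (A i)] {C M : Type*} [Group C] [CommGroup M]

/-- The families `(φ j (c j))_j` with `c` finitely supported and `∏ᶠ j, ψ (c j) = 1`. -/
noncomputable def amalgamationSubgroup (φ : ∀ i, C →* A i) (ψ : C →* M) :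
    Subgroup (restrictedProd A) :=
  ((restrictedProdFinprod ι M).comp (restrictedProdMap fun _ => ψ)).ker.map (restrictedProdMap φ)

lemma amalgamationSubgroup_normal {φ : ∀ i, C →* A i} (hφ : ∀ i c, φ i c ∈ center (A i))
    (ψ : C →* M) : (amalgamationSubgroup φ ψ).Normal :=
  normal_of_le_center <| (map_le_range _ _).trans (range_restrictedProdMap_le_center hφ)

variable [DecidableEq ι]

lemma inclRestricted_mul_inv_mem_amalgamationSubgroup (φ : ∀ i, C →* A i) (ψ : C →* M)
    (c : C) (j k : ι) :
    inclRestricted A j (φ j c) * (inclRestricted A k (φ k c))⁻¹ ∈ amalgamationSubgroup φ ψ := by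
  refine ⟨inclRestricted _ j c * (inclRestricted _ k c)⁻¹, ?_, ?_⟩
  · simp [restrictedProdMap_inclRestricted, restrictedProdFinprod_inclRestricted]
  · simp [restrictedProdMap_inclRestricted]

lemma eq_one_of_inclRestricted_mem_amalgamationSubgroup {φ : ∀ i, C →* A i}
    (hφ : ∀ i, Function.Injective (φ i)) {ψ : C →* M} (hψ : Function.Injective ψ) {i : ι}
    {a : A i} (ha : inclRestricted A i a ∈ amalgamationSubgroup φ ψ) : a = 1 := by
  obtain ⟨c, hc, hca⟩ := ha
  have ha_eq : a = φ i (c.1 i) := by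
    simpa using (congrFun (congrArg Subtype.val hca) i).symm
  have hc_single : c = inclRestricted _ i (c.1 i) := by
    apply restrictedProdMap_injective hφ
    rw [hca, restrictedProdMap_inclRestricted, ha_eq]
  have hci : c.1 i = 1 := by
    rw [SetLike.mem_coe, MonoidHom.mem_ker, hc_single, MonoidHom.comp_apply,
      restrictedProdMap_inclRestricted, restrictedProdFinprod_inclRestricted] at hc
    exact hψ (hc.trans (map_one ψ).symm)
  rw [ha_eq, hci, map_one]

end

/-- For the generalized central product of a family of groups `A i`
amalgamating a subgroup `C` that is central in each factor (the quotient of the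
restricted direct product by the normal subgroup generated by `φ i c * (φ j c)⁻¹`),
each canonical map `μ i : A i → A` is injective. -/
theorem generalized_central_product_factor_injective
    {ι : Type*} [DecidableEq ι] {A : ι → Type*} [∀ i, Group (A i)] {C : Type*} [Group C]
    (φ : ∀ i, C →* A i) (hinj : ∀ i, Function.Injective (φ i))
    (hcen : ∀ i (c : C), φ i c ∈ Subgroup.center (A i)) (i : ι) :
    Function.Injective
      ((QuotientGroup.mk' (Subgroup.normalClosure
          {x : restrictedProd A | ∃ (c : C) (j k : ι),
            x = inclRestricted A j (φ j c) * (inclRestricted A k (φ k c))⁻¹})).comp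
        (inclRestricted A i)) := by
  let ψ : C →* center (A i) := (φ i).codRestrict _ (hcen i)
  have hψ : Function.Injective ψ := (hinj i).codRestrict (hcen i)
  have := amalgamationSubgroup_normal hcen ψ
  refine (injective_iff_map_eq_one _).2 fun a ha =>
    eq_one_of_inclRestricted_mem_amalgamationSubgroup hinj hψ <|
      normalClosure_le_normal ?_ ((QuotientGroup.eq_one_iff _).1 ha)
  rintro _ ⟨c, j, k, rfl⟩
  exact inclRestricted_mul_inv_mem_amalgamationSubgroup φ ψ c j k
end

section
/- Every free group is residually solvable. -/
/-!
A variant of Magnus' embedding. In `ℤ⟨X⟩ / (x² : x ∈ X)` every `1 + x` is a unit with inverse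
`1 - x`, so `x ↦ 1 + x` extends to the free group. Let `I_k` be the ideal of elements without
terms of degree `< k`. Then `I_j I_k ⊆ I_{j+k}`, all commutators of units are `≡ 1 mod I_1`
(the quotient by `I_1` is `ℤ`), and `uv - vu = (u-1)(v-1) - (v-1)(u-1)` shows that commutators
of units `≡ 1 mod I_j` are `≡ 1 mod I_{2j}`; so the `(n+1)`-st derived subgroup maps into the
units `≡ 1 mod I_{2^n}`. A reduced word `x₁^n₁ ⋯ x_k^n_k` with `xᵢ ≠ xᵢ₊₁` and `nᵢ ≠ 0` maps to
`∏ (1 + nᵢ xᵢ)`, whose coefficient at the monomial `x₁ ⋯ x_k` is `n₁ ⋯ n_k ≠ 0`. Adjacent letters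
of that monomial differ, so the coefficient survives in the quotient and the image is not
`≡ 1 mod I_{k+1}`.
-/

open scoped commutatorElement

/-- A group is residually solvable iff every nontrivial element survives in some
solvable quotient; equivalently, the intersection of the derived series is trivial. -/
def ResiduallySolvable (G : Type*) [Group G] : Prop :=
  ⨅ n : ℕ, derivedSeries G n = ⊥

theorem ResiduallySolvable.of_injective {G H : Type*} [Group G] [Group H] {f : G →* H}
    (hf : Function.Injective f) (hH : ResiduallySolvable H) : ResiduallySolvable G := by
  refine eq_bot_iff.2 fun g hg ↦ (injective_iff_map_eq_one f).1 hf g ?_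
  refine (Subgroup.mem_bot).1 (hH ▸ Subgroup.mem_iInf.2 fun n ↦ ?_)
  exact map_derivedSeries_le_derivedSeries f n ⟨g, Subgroup.mem_iInf.1 hg n, rfl⟩

namespace TwoSidedIdeal

variable {R : Type*} [Ring R]

def unitsCongrOne (I : TwoSidedIdeal R) : Subgroup Rˣ :=
  (Units.map (I.ringCon.mk' : R →* I.ringCon.Quotient)).ker

theorem mem_unitsCongrOne {I : TwoSidedIdeal R} {u : Rˣ} :
    u ∈ I.unitsCongrOne ↔ (u : R) - 1 ∈ I := by
  rw [unitsCongrOne, MonoidHom.mem_ker, Units.ext_iff, ← rel_iff]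
  exact I.ringCon.eq

theorem unitsCongrOne_mono {I J : TwoSidedIdeal R} (h : I ≤ J) :
    I.unitsCongrOne ≤ J.unitsCongrOne :=
  fun _ hu ↦ mem_unitsCongrOne.2 (h (mem_unitsCongrOne.1 hu))

theorem commutatorElement_mem_unitsCongrOne {I : TwoSidedIdeal R} {u v : Rˣ}
    (h : (u * v - v * u : R) ∈ I) : ⁅u, v⁆ ∈ I.unitsCongrOne := by
  have key : ((⁅u, v⁆ : Rˣ) : R) - 1 = (u * v - v * u : R) * (↑u⁻¹ * ↑v⁻¹) := by
    simp only [commutatorElement_def, Units.val_mul, sub_mul, mul_assoc, Units.mul_inv_cancel_left,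
      Units.mul_inv]
  exact mem_unitsCongrOne.2 (key ▸ I.mul_mem_right _ _ h)

theorem derivedSeries_units_le_unitsCongrOne {I : ℕ → TwoSidedIdeal R}
    (hcomm : ∀ a b : R, a * b - b * a ∈ I 1)
    (hmul : ∀ {j k : ℕ} {a b : R}, a ∈ I j → b ∈ I k → a * b ∈ I (j + k)) (n : ℕ) :
    derivedSeries Rˣ (n + 1) ≤ (I (2 ^ n)).unitsCongrOne := by
  induction n with
  | zero =>
    rw [derivedSeries_succ, Subgroup.commutator_le]
    exact fun u _ v _ ↦ commutatorElement_mem_unitsCongrOne (hcomm u v)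
  | succ n ih =>
    rw [derivedSeries_succ, Subgroup.commutator_le]
    intro u hu v hv
    have hu := mem_unitsCongrOne.1 (ih hu)
    have hv := mem_unitsCongrOne.1 (ih hv)
    have hcomm_uv : (u * v - v * u : R) = (u - 1) * (v - 1) - (v - 1) * (u - 1) := by noncomm_ring
    apply commutatorElement_mem_unitsCongrOne
    rw [hcomm_uv, pow_succ, mul_two]
    exact _root_.sub_mem (hmul hu hv) (hmul hv hu)

end TwoSidedIdeal

section OneAddZSMul

variable {R : Type*} [Ring R]

def oneAddZSMulHom (x : R) (hx : x * x = 0) : Multiplicative ℤ →* Rˣ :=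
  have hsq (a b : ℤ) : (a • x) * (b • x) = 0 := by rw [smul_mul_smul_comm, hx, smul_zero]
  { toFun n :=
      { val := 1 + n.toAdd • x
        inv := 1 - n.toAdd • x
        val_inv := by simp only [add_mul, mul_sub, one_mul, mul_one, hsq]; abel
        inv_val := by simp only [sub_mul, mul_add, one_mul, mul_one, hsq]; abel }
    map_one' := by ext; simp
    map_mul' a b := by
      ext
      change 1 + (a * b).toAdd • x = (1 + a.toAdd • x) * (1 + b.toAdd • x)
      simp only [add_mul, mul_add, one_mul, mul_one, hsq, toAdd_mul, add_smul]
      abel }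

theorem val_oneAddZSMulHom (x : R) (hx : x * x = 0) (n : Multiplicative ℤ) :
    (oneAddZSMulHom x hx n : R) = 1 + n.toAdd • x := rfl

end OneAddZSMul

open MonoidAlgebra

namespace MonoidAlgebra

variable {R M : Type*}

section Monoid

variable [Monoid M]

theorem coeff_mul_eq_zero [Semiring R] {x y : R[M]} {m : M}
    (h : ∀ p q, p * q = m → x.coeff p = 0 ∨ y.coeff q = 0) : (x * y).coeff m = 0 := by
  classical
  rw [coeff_mul, Finsupp.sum]
  refine Finset.sum_eq_zero fun p _ ↦ Finset.sum_eq_zero fun q _ ↦ ?_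
  dsimp only
  split_ifs with hpq
  · rcases h p q hpq with hp | hq <;> simp [*]
  · rfl

noncomputable def vanishingIdeal [Ring R] (T : Set M)
    (hT : ∀ p q, p * q ∈ T → p ∈ T ∧ q ∈ T) : TwoSidedIdeal R[M] :=
  .mk' {x | ∀ m ∈ T, x.coeff m = 0} (fun _ _ ↦ rfl)
    (fun hx hy m hm ↦ by rw [coeff_add, Finsupp.add_apply, hx m hm, hy m hm, add_zero])
    (fun hx m hm ↦ by rw [coeff_neg, Finsupp.neg_apply, hx m hm, neg_zero])
    (fun hy m hm ↦ coeff_mul_eq_zero fun p q hpq ↦ .inr (hy q (hT p q (hpq ▸ hm)).2))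
    (fun hx m hm ↦ coeff_mul_eq_zero fun p q hpq ↦ .inl (hx p (hT p q (hpq ▸ hm)).1))

theorem mem_vanishingIdeal [Ring R] {T : Set M} {hT : ∀ p q, p * q ∈ T → p ∈ T ∧ q ∈ T}
    {x : R[M]} : x ∈ vanishingIdeal T hT ↔ ∀ m ∈ T, x.coeff m = 0 :=
  TwoSidedIdeal.mem_mk' ..

end Monoid

theorem coeff_mul_one [Semiring R] [LeftCancelMonoid M] [Subsingleton Mˣ] (x y : R[M]) :
    (x * y).coeff 1 = x.coeff 1 * y.coeff 1 := by
  rw [coeff_mul_antidiag x y 1 {(1, 1)} fun {p} ↦ ?_, Finset.sum_singleton]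
  rw [Finset.mem_singleton, LeftCancelMonoid.mul_eq_one, Prod.ext_iff]

end MonoidAlgebra

namespace FreeMonoid

variable {X : Type*}

def IsStutterFree (m : FreeMonoid X) : Prop :=
  m.toList.IsChain (· ≠ ·)

theorem IsStutterFree.of_mul {p q : FreeMonoid X} (h : (p * q).IsStutterFree) :
    p.IsStutterFree ∧ q.IsStutterFree :=
  ⟨List.IsChain.left_of_append h, List.IsChain.right_of_append h⟩

end FreeMonoid

namespace Magnus

open FreeMonoid Monoid

variable (X : Type*)

/-- The ideal generated by the squares of the generators, described through coefficients: on the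
quotient `MagnusRing X` exactly the coefficients at stutter-free monomials are well defined. -/
noncomputable def sqIdeal : TwoSidedIdeal ℤ[FreeMonoid X] :=
  vanishingIdeal {m | m.IsStutterFree} fun _ _ ↦ IsStutterFree.of_mul

noncomputable def orderIdeal (k : ℕ) : TwoSidedIdeal ℤ[FreeMonoid X] :=
  vanishingIdeal {m | m.IsStutterFree ∧ m.length < k} fun p q ⟨hm, hk⟩ ↦
    have hk' := length_mul p q ▸ hk
    ⟨⟨hm.of_mul.1, by omega⟩, ⟨hm.of_mul.2, by omega⟩⟩

variable {X}

theorem sqIdeal_le_orderIdeal (k : ℕ) : sqIdeal X ≤ orderIdeal X k :=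
  fun _ hx ↦ mem_vanishingIdeal.2 fun m hm ↦ mem_vanishingIdeal.1 hx m hm.1

theorem orderIdeal_antitone : Antitone (orderIdeal X) :=
  fun _ _ hjk _ hx ↦ mem_vanishingIdeal.2 fun m hm ↦
    mem_vanishingIdeal.1 hx m ⟨hm.1, hm.2.trans_le hjk⟩

theorem mul_mem_orderIdeal {j k : ℕ} {a b : ℤ[FreeMonoid X]} (ha : a ∈ orderIdeal X j)
    (hb : b ∈ orderIdeal X k) : a * b ∈ orderIdeal X (j + k) := by
  refine mem_vanishingIdeal.2 fun m ⟨hm, hk⟩ ↦ coeff_mul_eq_zero fun p q hpq ↦ ?_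
  subst hpq
  rw [length_mul] at hk
  rcases Nat.lt_or_ge p.length j with hj | hj
  · exact .inl (mem_vanishingIdeal.1 ha p ⟨hm.of_mul.1, hj⟩)
  · exact .inr (mem_vanishingIdeal.1 hb q ⟨hm.of_mul.2, by omega⟩)

theorem mul_sub_mul_mem_orderIdeal_one (a b : ℤ[FreeMonoid X]) :
    a * b - b * a ∈ orderIdeal X 1 := by
  refine mem_vanishingIdeal.2 fun m ⟨_, hm⟩ ↦ ?_
  rw [Nat.lt_one_iff, length_eq_zero] at hm
  rw [hm, coeff_sub, Finsupp.sub_apply, coeff_mul_one, coeff_mul_one, mul_comm, sub_self]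

abbrev MagnusRing (X : Type*) := (sqIdeal X).ringCon.Quotient

noncomputable def mk : ℤ[FreeMonoid X] →+* MagnusRing X := (sqIdeal X).ringCon.mk'

theorem mk_surjective : Function.Surjective (mk (X := X)) := RingCon.mk'_surjective _

theorem mk_eq_zero {a : ℤ[FreeMonoid X]} : mk a = 0 ↔ a ∈ sqIdeal X := by
  rw [← TwoSidedIdeal.mem_ker, mk, TwoSidedIdeal.ker_ringCon_mk']

noncomputable def filtration (k : ℕ) : TwoSidedIdeal (MagnusRing X) :=
  .ker ((sqIdeal X).ringCon.map (orderIdeal X k).ringCon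
    (TwoSidedIdeal.ringCon_le_iff.1 (sqIdeal_le_orderIdeal k)))

theorem mk_mem_filtration {k : ℕ} {a : ℤ[FreeMonoid X]} :
    mk a ∈ filtration k ↔ a ∈ orderIdeal X k := by
  change (orderIdeal X k).ringCon.mk' a = 0 ↔ _
  rw [← TwoSidedIdeal.mem_ker, TwoSidedIdeal.ker_ringCon_mk']

theorem filtration_antitone : Antitone (filtration (X := X)) := by
  intro j k hjk b hb
  obtain ⟨a, rfl⟩ := mk_surjective b
  exact mk_mem_filtration.2 (orderIdeal_antitone hjk (mk_mem_filtration.1 hb))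

theorem derivedSeries_le_filtration (n : ℕ) :
    derivedSeries (MagnusRing X)ˣ (n + 1) ≤ (filtration (2 ^ n)).unitsCongrOne := by
  refine TwoSidedIdeal.derivedSeries_units_le_unitsCongrOne (fun a b ↦ ?_)
    (fun {j k a b} ha hb ↦ ?_) n
  · obtain ⟨a, rfl⟩ := mk_surjective a
    obtain ⟨b, rfl⟩ := mk_surjective b
    rw [← map_mul, ← map_mul, ← map_sub, mk_mem_filtration]
    exact mul_sub_mul_mem_orderIdeal_one a b
  · obtain ⟨a, rfl⟩ := mk_surjective a
    obtain ⟨b, rfl⟩ := mk_surjective b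
    rw [← map_mul, mk_mem_filtration]
    exact mul_mem_orderIdeal (mk_mem_filtration.1 ha) (mk_mem_filtration.1 hb)

noncomputable def gen (x : X) : MagnusRing X := mk (single (FreeMonoid.of x) 1)

theorem gen_mul_self (x : X) : gen x * gen x = 0 := by
  rw [gen, ← map_mul, single_mul_single, one_mul, mk_eq_zero]
  refine mem_vanishingIdeal.2 fun m hm ↦ ?_
  rw [coeff_single, Finsupp.single_eq_of_ne]
  rintro rfl
  exact List.isChain_cons_cons.1 hm |>.1 rfl

/-- The free group enters as a free product of infinite cyclic groups, whose reduced words are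
the syllable decompositions `x₁^n₁ ⋯ x_k^n_k`. -/
noncomputable def magnusHom : CoprodI (fun _ : X ↦ FreeGroup Unit) →* (MagnusRing X)ˣ :=
  CoprodI.lift fun x ↦
    (oneAddZSMulHom (gen x) (gen_mul_self x)).comp FreeGroup.mulEquivIntOfUnique.toMonoidHom

noncomputable def oneAddSingleProd (L : List (X × ℤ)) : ℤ[FreeMonoid X] :=
  (L.map fun p ↦ 1 + single (FreeMonoid.of p.1) p.2).prod

theorem coeff_oneAddSingleProd_of_length_lt (L : List (X × ℤ)) {m : FreeMonoid X}
    (hm : L.length < m.length) : (oneAddSingleProd L).coeff m = 0 := by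
  induction L generalizing m with
  | nil =>
    rw [oneAddSingleProd, List.map_nil, List.prod_nil, one_def, coeff_single,
      Finsupp.single_eq_of_ne]
    rintro rfl
    exact Nat.lt_irrefl 0 hm
  | cons p L ih =>
    rw [oneAddSingleProd, List.map_cons, List.prod_cons]
    refine coeff_mul_eq_zero fun q r hqr ↦ ?_
    rw [← hqr, length_mul, List.length_cons] at hm
    rcases Nat.lt_or_ge 1 q.length with hq | hq
    · refine .inl ?_
      rw [coeff_add, Finsupp.add_apply, one_def, coeff_single, coeff_single,
        Finsupp.single_eq_of_ne, Finsupp.single_eq_of_ne, add_zero]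
      · rintro rfl; exact Nat.lt_irrefl 1 hq
      · rintro rfl; exact Nat.not_lt_zero 1 hq
    · exact .inr (ih (by omega))

theorem coeff_oneAddSingleProd_ofList (L : List (X × ℤ)) :
    (oneAddSingleProd L).coeff (ofList (L.map Prod.fst)) = (L.map Prod.snd).prod := by
  induction L with
  | nil => exact coeff_one_one
  | cons p L ih =>
    have hlen : L.length < (FreeMonoid.of p.1 * ofList (L.map Prod.fst)).length := by
      have : (ofList (L.map Prod.fst)).length = L.length := List.length_map ..
      rw [length_mul, length_of]; omega
    rw [oneAddSingleProd, List.map_cons, List.prod_cons, List.map_cons, ofList_cons, add_mul,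
      one_mul, coeff_add, Finsupp.add_apply, ← oneAddSingleProd,
      coeff_oneAddSingleProd_of_length_lt L hlen, coeff_single_mul_mul, ih, List.map_cons,
      List.prod_cons, zero_add]

theorem val_magnusHom_prod (w : CoprodI.Word fun _ : X ↦ FreeGroup Unit) :
    (magnusHom w.prod : MagnusRing X) =
      mk (oneAddSingleProd
        (w.toList.map fun l ↦ (l.1, (FreeGroup.mulEquivIntOfUnique l.2).toAdd))) := by
  rw [CoprodI.Word.prod, map_list_prod, ← Units.coeHom_apply, map_list_prod, oneAddSingleProd,
    map_list_prod, List.map_map, List.map_map, List.map_map, List.map_map]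
  refine congrArg List.prod (List.map_congr_left fun l _ ↦ ?_)
  simp only [Function.comp_apply, Units.coeHom_apply, magnusHom, CoprodI.lift_of,
    MonoidHom.comp_apply, val_oneAddZSMulHom, map_add, map_one, gen, ← map_zsmul, smul_single',
    mul_one]
  rfl

theorem magnusHom_prod_notMem (w : CoprodI.Word fun _ : X ↦ FreeGroup Unit)
    (hw : w.toList ≠ []) :
    magnusHom w.prod ∉ (filtration (w.toList.length + 1)).unitsCongrOne := by
  set L := w.toList.map fun l ↦ (l.1, (FreeGroup.mulEquivIntOfUnique l.2).toAdd) with hL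
  have hstutter : (ofList (L.map Prod.fst)).IsStutterFree := by
    simpa [IsStutterFree, hL, List.map_map, List.isChain_map] using w.chain_ne
  have hlen : (ofList (L.map Prod.fst)).length = w.toList.length := by
    rw [length, toList_ofList, List.length_map, hL, List.length_map]
  have hne_one : ofList (L.map Prod.fst) ≠ 1 := by
    rw [ne_eq, ← length_eq_zero, hlen, List.length_eq_zero_iff]
    exact hw
  have hprod : (L.map Prod.snd).prod ≠ 0 := by
    refine List.prod_ne_zero ?_
    simpa [hL] using fun x hx ↦ w.ne_one _ hx rfl
  rw [TwoSidedIdeal.mem_unitsCongrOne, val_magnusHom_prod, ← map_one (mk (X := X)), ← map_sub,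
    mk_mem_filtration, orderIdeal, mem_vanishingIdeal]
  intro h
  have := h _ ⟨hstutter, hlen ▸ Nat.lt_succ_self _⟩
  rw [coeff_sub, Finsupp.sub_apply, coeff_oneAddSingleProd_ofList, one_def, coeff_single,
    Finsupp.single_eq_of_ne hne_one, sub_zero] at this
  exact hprod this

theorem residuallySolvable_coprodI : ResiduallySolvable (CoprodI fun _ : X ↦ FreeGroup Unit) := by
  classical
  refine eq_bot_iff.2 fun g hg ↦ Subgroup.mem_bot.2 ?_
  by_contra hg1
  set w := CoprodI.Word.equiv g
  have hgw : w.prod = g := CoprodI.Word.equiv.symm_apply_apply g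
  have hw : w.toList ≠ [] := fun hw ↦ hg1 <| by
    rw [← hgw, ← CoprodI.Word.prod_empty, (CoprodI.Word.ext hw : w = .empty)]
  have hn := Nat.lt_two_pow_self (n := w.toList.length)
  apply magnusHom_prod_notMem w hw
  rw [hgw]
  refine TwoSidedIdeal.unitsCongrOne_mono (filtration_antitone hn)
    (derivedSeries_le_filtration _ ?_)
  exact map_derivedSeries_le_derivedSeries _ _ ⟨g, Subgroup.mem_iInf.1 hg _, rfl⟩

end Magnus

theorem FreeGroup.residuallySolvable (X : Type*) : ResiduallySolvable (FreeGroup X) :=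
  Magnus.residuallySolvable_coprodI.of_injective (f := freeGroupEquivCoprodI.toMonoidHom)
    freeGroupEquivCoprodI.injective

/-- Every free group is residually solvable. -/
theorem freeGroup_residuallySolvable (F : Type*) [Group F] [IsFreeGroup F] :
    ResiduallySolvable F :=
  (FreeGroup.residuallySolvable _).of_injective (f := (IsFreeGroup.toFreeGroup F).toMonoidHom)
    (IsFreeGroup.toFreeGroup F).injective
end
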